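/- arXiv:1910.04568 — 2 statements merged into one kernel-verified Lean document; each statement's English description precedes it below -/
import Mathlib

section
/- Let Δ be a base of an irreducible root system spanning a Euclidean space with Weyl-invariant inner product. Then the inverse of the Gram matrix ((α,β))_{α,β∈Δ} has all entries strictly positive. -/
/-!
The Gram matrix `A` of the simple roots is positive definite, and its off-diagonal entries are
`≤ 0`: if `(α, β) > 0`, the root `s_α β = β - t α` with `t > 0` would have coordinates of both
signs in the base. For such a matrix, `A x ≥ 0` forces `x ≥ 0` (pair `A x` with the negative part
`v` of `x`: the cross terms are `≤ 0`, so `vᵀ A v ≤ 0`), hence every column `x` of `A⁻¹` is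
nonnegative. Its support contains the diagonal entry (`A⁻¹` is positive definite), and if `x b = 0`
with `b` off the diagonal then `0 = (A x) b` is a sum of nonpositive terms `A b a * x a`, so `b`
is orthogonal to the whole support. Irreducibility therefore makes the support everything.
-/

open Finset
open scoped RealInnerProductSpace

/-- `Δ` is a base (set of simple roots) of a (reduced, crystallographic) root system `Φ`
spanning the Euclidean space `E`.  Since the reflections used here are the orthogonal
reflections with respect to the inner product, the inner product is automatically
invariant under the Weyl group. -/
structure IsRootSystemBase {E : Type*} [NormedAddCommGroup E] [InnerProductSpace ℝ E]
    [FiniteDimensional ℝ E] (Φ : Set E) (Δ : Finset E) : Prop where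
  subset : (Δ : Set E) ⊆ Φ
  span_top : Submodule.span ℝ (Δ : Set E) = ⊤
  indep : LinearIndependent ℝ (fun α : Δ => (α : E))
  ne_zero : ∀ α ∈ Φ, α ≠ (0 : E)
  reflect_mem : ∀ α ∈ Φ, ∀ β ∈ Φ, β - (2 * ⟪α, β⟫ / ⟪α, α⟫) • α ∈ Φ
  crystallographic : ∀ α ∈ Φ, ∀ β ∈ Φ, ∃ n : ℤ, 2 * ⟪α, β⟫ / ⟪α, α⟫ = (n : ℝ)
  pos_or_neg : ∀ x ∈ Φ,
      (∃ c : E → ℝ, (∀ β ∈ Δ, 0 ≤ c β) ∧ x = ∑ β ∈ Δ, c β • β) ∨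
      (∃ c : E → ℝ, (∀ β ∈ Δ, 0 ≤ c β) ∧ x = -∑ β ∈ Δ, c β • β)

/-- The root system `Φ` with base `Δ` is irreducible: `Δ` cannot be split into two
nonempty mutually orthogonal pieces. -/
def IsIrreducibleBase {E : Type*} [NormedAddCommGroup E] [InnerProductSpace ℝ E] [DecidableEq E]
    (Δ : Finset E) : Prop :=
  ∀ s ⊆ Δ, s.Nonempty → s ≠ Δ → ∃ α ∈ s, ∃ β ∈ Δ \ s, ⟪α, β⟫ ≠ (0 : ℝ)

namespace Matrix

variable {n : Type*} [Fintype n] {A : Matrix n n ℝ}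

theorem PosDef.nonneg_of_mulVec_nonneg (hA : A.PosDef) (hZ : ∀ i j, i ≠ j → A i j ≤ 0)
    {x : n → ℝ} (hx : 0 ≤ A *ᵥ x) : 0 ≤ x := by
  set u : n → ℝ := fun k ↦ (x k)⁺
  set v : n → ℝ := fun k ↦ (x k)⁻
  have hcross : v ⬝ᵥ A *ᵥ u ≤ 0 := by
    rw [dot_mulVec_eq_sum_sum]
    refine sum_nonpos fun k _ ↦ sum_nonpos fun l _ ↦ ?_
    obtain rfl | hlk := eq_or_ne l k
    · rcases le_total 0 (x l) with hxl | hxl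
      · simp [v, negPart_eq_zero.mpr hxl]
      · simp [u, posPart_eq_zero.mpr hxl]
    · exact mul_nonpos_of_nonpos_of_nonneg
        (mul_nonpos_of_nonneg_of_nonpos (negPart_nonneg _) (hZ l k hlk)) (posPart_nonneg _)
  have hpair : 0 ≤ v ⬝ᵥ A *ᵥ x :=
    sum_nonneg fun k _ ↦ mul_nonneg (negPart_nonneg _) (hx k)
  have hx_eq : x = u - v := funext fun k ↦ (posPart_sub_negPart (x k)).symm
  have hv : v = 0 := by
    by_contra hv
    have := hA.dotProduct_mulVec_pos hv
    rw [star_trivial] at this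
    rw [hx_eq, mulVec_sub, dotProduct_sub] at hpair
    linarith
  exact fun i ↦ negPart_eq_zero.mp (congrFun hv i)

theorem mul_eq_zero_of_mulVec_apply_eq_zero (hZ : ∀ i j, i ≠ j → A i j ≤ 0) {x : n → ℝ}
    (hx : 0 ≤ x) {i : n} (hxi : x i = 0) (hAxi : (A *ᵥ x) i = 0) (k : n) :
    A i k * x k = 0 := by
  have hterm : ∀ l ∈ univ, A i l * x l ≤ 0 := fun l _ ↦ by
    obtain rfl | hil := eq_or_ne i l
    · simp [hxi]
    · exact mul_nonpos_of_nonpos_of_nonneg (hZ i l hil) (hx l)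
  exact (sum_eq_zero_iff_of_nonpos hterm).mp hAxi k (mem_univ k)

theorem PosDef.inv_apply_pos [DecidableEq n] (hA : A.PosDef) (hZ : ∀ i j, i ≠ j → A i j ≤ 0)
    (hirr : ∀ s : Finset n, s.Nonempty → s ≠ univ → ∃ i ∈ s, ∃ j ∉ s, A i j ≠ 0) (i j : n) :
    0 < A⁻¹ i j := by
  set x := A⁻¹ *ᵥ Pi.single j 1
  have hAx : A *ᵥ x = Pi.single j 1 := by
    rw [mulVec_mulVec, mul_nonsing_inv _ ((isUnit_iff_isUnit_det A).mp hA.isUnit), one_mulVec]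
  have hx : 0 ≤ x := hA.nonneg_of_mulVec_nonneg hZ (hAx ▸ Pi.single_nonneg.mpr zero_le_one)
  set S := univ.filter fun k ↦ 0 < x k
  suffices S = univ by
    have hi : i ∈ S := this ▸ mem_univ i
    simpa [S, x] using hi
  by_contra hS
  obtain ⟨a, haS, b, hbS, hab⟩ := hirr S ⟨j, by simpa [S, x] using hA.inv.diag_pos⟩ hS
  have hxa : 0 < x a := (mem_filter.mp haS).2
  have hxb : x b = 0 := le_antisymm (by simpa [S] using hbS) (hx b)
  have hbj : b ≠ j := by rintro rfl; simp [S, x, hA.inv.diag_pos] at hbS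
  have hAxb : (A *ᵥ x) b = 0 := by rw [hAx, Pi.single_eq_of_ne hbj]
  have hba := mul_eq_zero_of_mulVec_apply_eq_zero hZ hx hxb hAxb a
  rw [← hA.isHermitian.apply, star_trivial] at hab
  exact hab ((mul_eq_zero.mp hba).resolve_right hxa.ne')

end Matrix

namespace IsRootSystemBase

variable {E : Type*} [NormedAddCommGroup E] [InnerProductSpace ℝ E] [FiniteDimensional ℝ E]
  {Φ : Set E} {Δ : Finset E}

noncomputable def basis (hbase : IsRootSystemBase Φ Δ) : Module.Basis Δ ℝ E :=
  .mk hbase.indep (by simp [hbase.span_top])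

variable (hbase : IsRootSystemBase Φ Δ)
include hbase

theorem basis_repr_coe (α : Δ) : hbase.basis.repr α = Finsupp.single α 1 := by
  rw [← hbase.basis.repr_self α, basis, Module.Basis.mk_apply]

theorem basis_repr_sum (c : E → ℝ) (α : Δ) :
    hbase.basis.repr (∑ β ∈ Δ, c β • β) α = c α := by
  have : ∑ β ∈ Δ, c β • β = ∑ β : Δ, c β • hbase.basis β := by
    simp only [basis, Module.Basis.mk_apply]
    exact (sum_coe_sort Δ fun β ↦ c β • β).symm
  rw [this, Module.Basis.repr_sum_self]

theorem basis_repr_nonneg_or_nonpos {x : E} (hx : x ∈ Φ) :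
    (∀ α, 0 ≤ hbase.basis.repr x α) ∨ (∀ α, hbase.basis.repr x α ≤ 0) := by
  rcases hbase.pos_or_neg x hx with ⟨c, hc, rfl⟩ | ⟨c, hc, rfl⟩
  · exact .inl fun α ↦ (hbase.basis_repr_sum c α).symm ▸ hc α α.2
  · refine .inr fun α ↦ ?_
    rw [map_neg, Finsupp.neg_apply, basis_repr_sum, neg_nonpos]
    exact hc α α.2

theorem inner_nonpos {α β : Δ} (hne : α ≠ β) : ⟪(α : E), β⟫ ≤ 0 := by
  by_contra! hpos
  have hγ := hbase.reflect_mem α (hbase.subset α.2) β (hbase.subset β.2)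
  set t := 2 * ⟪(α : E), β⟫ / ⟪(α : E), α⟫
  have ht : 0 < t :=
    div_pos (by positivity) (real_inner_self_pos.mpr (hbase.ne_zero α (hbase.subset α.2)))
  rcases hbase.basis_repr_nonneg_or_nonpos hγ with hnonneg | hnonpos
  · have := hnonneg α
    simp [basis_repr_coe, hne] at this
    linarith
  · have := hnonpos β
    simp [basis_repr_coe, hne] at this
    linarith

end IsRootSystemBase

theorem IsIrreducibleBase.exists_inner_ne_zero {E : Type*} [NormedAddCommGroup E]
    [InnerProductSpace ℝ E] [DecidableEq E] {Δ : Finset E} (hirr : IsIrreducibleBase Δ)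
    (s : Finset Δ) (hs : s.Nonempty) (hsΔ : s ≠ univ) :
    ∃ α ∈ s, ∃ β ∉ s, ⟪(α : E), (β : E)⟫ ≠ 0 := by
  set t := s.map (Function.Embedding.subtype (· ∈ Δ))
  have hsub : t ⊆ Δ := fun x hx ↦ by
    obtain ⟨α, -, rfl⟩ := mem_map.mp hx
    exact α.2
  have hne : t ≠ Δ := by
    refine fun h ↦ hsΔ (eq_univ_of_forall fun α ↦ ?_)
    have : (α : E) ∈ t := by rw [h]; exact α.2
    simpa [t] using this
  obtain ⟨α, hα, β, hβ, h⟩ := hirr t hsub hs.map hne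
  simp only [t, mem_map, Function.Embedding.coe_subtype, mem_sdiff] at hα hβ
  obtain ⟨α, hαs, hα⟩ := hα
  exact ⟨α, hαs, ⟨β, hβ.1⟩, fun h' ↦ hβ.2 ⟨_, h', rfl⟩, hα ▸ h⟩

/-- For an irreducible root system, the inverse of the Gram matrix `((α,β))_{α,β∈Δ}`
of the simple roots has strictly positive entries. -/
theorem gram_matrix_inverse_entries_pos
    {E : Type*} [NormedAddCommGroup E] [InnerProductSpace ℝ E] [FiniteDimensional ℝ E]
    [DecidableEq E] (Φ : Set E) (Δ : Finset E) (hbase : IsRootSystemBase Φ Δ)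
    (hirr : IsIrreducibleBase Δ) :
    ∀ α β : Δ, 0 < ((Matrix.of fun α β : Δ => ⟪(α : E), (β : E)⟫)⁻¹) α β := by
  have hgram : (Matrix.of fun α β : Δ => ⟪(α : E), (β : E)⟫).PosDef :=
    Matrix.posDef_gram_of_linearIndependent hbase.indep
  exact hgram.inv_apply_pos (fun _ _ ↦ hbase.inner_nonpos) hirr.exists_inner_ne_zero
end

section
/- Let Δ be a base of a root system spanning a Euclidean space with Weyl-invariant inner product, {w_α} the dual weights, d_α = Σ_{β}(w_α,w_β), and w̄_α = w_α/d_α the weighted dual weights. Let a ∈ E* be a linear functional such that w̄_α(a) ≥ w̄_β(a) for all β ∈ Δ and w̄_α(a) ≥ 0. Then α(a) ≥ w̄_α(a). (This is the case I = ∅ of the main appendix theorem.) -/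
open Finset
open scoped RealInnerProductSpace

/-!
Expanding `α = ∑ β, (α, β) w_β` gives `α(a) = ∑ β, (α, β) a(w_β)`. For `β ≠ α` the coefficient
`(α, β)` is `≤ 0` while maximality gives `a(w_β) ≤ d_β w̄_α(a)`, so
`α(a) ≥ w̄_α(a) ∑ β, (α, β) d_β = w̄_α(a) (α, ∑ γ, w_γ) = w̄_α(a)`.
The division by `d_β` is harmless because `d_β > 0`: the dual basis of an obtuse basis is acute.
-/

section DualFamily

variable {E : Type*} [NormedAddCommGroup E] [InnerProductSpace ℝ E] {Δ : Finset E}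

lemma eq_zero_of_forall_inner_eq_zero_of_span_eq_top (hspan : Submodule.span ℝ (Δ : Set E) = ⊤)
    {x : E} (hx : ∀ γ ∈ Δ, ⟪x, γ⟫ = 0) : x = 0 := by
  obtain ⟨c, -, hc⟩ := Submodule.mem_span_finset.1
    (by simp [hspan] : x ∈ Submodule.span ℝ (Δ : Set E))
  refine inner_self_eq_zero (𝕜 := ℝ).1 ?_
  nth_rw 2 [← hc]
  simp only [inner_sum, real_inner_smul_right]
  exact Finset.sum_eq_zero fun γ hγ => by rw [hx γ hγ, mul_zero]

lemma inner_sum_posPart_smul_sum_negPart_smul_nonpos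
    (hobtuse : ∀ β ∈ Δ, ∀ γ ∈ Δ, β ≠ γ → ⟪β, γ⟫ ≤ 0) (c : E → ℝ) :
    ⟪∑ β ∈ Δ, (c β)⁺ • β, ∑ γ ∈ Δ, (c γ)⁻ • γ⟫ ≤ 0 := by
  rw [sum_inner]
  simp only [inner_sum, real_inner_smul_left, real_inner_smul_right]
  refine Finset.sum_nonpos fun β hβ => Finset.sum_nonpos fun γ hγ => ?_
  rcases eq_or_ne β γ with rfl | hne
  · rcases le_total (c β) 0 with h | h
    · simp [posPart_eq_zero.2 h]
    · simp [negPart_eq_zero.2 h]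
  · exact mul_nonpos_of_nonneg_of_nonpos (negPart_nonneg _)
      (mul_nonpos_of_nonneg_of_nonpos (posPart_nonneg _) (hobtuse β hβ γ hγ hne))

variable [DecidableEq E] {w : E → E}

lemma inner_dual_sum_smul (hw : ∀ α ∈ Δ, ∀ β ∈ Δ, ⟪w α, β⟫ = if α = β then (1 : ℝ) else 0)
    (c : E → ℝ) {γ : E} (hγ : γ ∈ Δ) : ⟪w γ, ∑ β ∈ Δ, c β • β⟫ = c γ := by
  rw [inner_sum, Finset.sum_congr rfl fun β hβ => by rw [real_inner_smul_right, hw γ hγ β hβ]]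
  simp [hγ]

lemma eq_sum_inner_dual_smul (hspan : Submodule.span ℝ (Δ : Set E) = ⊤)
    (hw : ∀ α ∈ Δ, ∀ β ∈ Δ, ⟪w α, β⟫ = if α = β then (1 : ℝ) else 0) (v : E) :
    v = ∑ γ ∈ Δ, ⟪w γ, v⟫ • γ := by
  obtain ⟨c, -, rfl⟩ := Submodule.mem_span_finset.1
    (by simp [hspan] : v ∈ Submodule.span ℝ (Δ : Set E))
  exact Finset.sum_congr rfl fun γ hγ => by rw [inner_dual_sum_smul hw c hγ]

lemma eq_sum_inner_smul_dual (hspan : Submodule.span ℝ (Δ : Set E) = ⊤)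
    (hw : ∀ α ∈ Δ, ∀ β ∈ Δ, ⟪w α, β⟫ = if α = β then (1 : ℝ) else 0) (v : E) :
    v = ∑ β ∈ Δ, ⟪v, β⟫ • w β := by
  refine (sub_eq_zero.1 (eq_zero_of_forall_inner_eq_zero_of_span_eq_top hspan fun γ hγ => ?_)).symm
  rw [inner_sub_left, sum_inner,
    Finset.sum_congr rfl fun β hβ => by rw [real_inner_smul_left, hw β hβ γ hγ]]
  simp [hγ]

lemma inner_dual_nonneg_of_forall_inner_nonneg (hspan : Submodule.span ℝ (Δ : Set E) = ⊤)
    (hw : ∀ α ∈ Δ, ∀ β ∈ Δ, ⟪w α, β⟫ = if α = β then (1 : ℝ) else 0)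
    (hobtuse : ∀ β ∈ Δ, ∀ γ ∈ Δ, β ≠ γ → ⟪β, γ⟫ ≤ 0)
    {v : E} (hv : ∀ δ ∈ Δ, 0 ≤ ⟪v, δ⟫) {γ : E} (hγ : γ ∈ Δ) : 0 ≤ ⟪w γ, v⟫ := by
  set c : E → ℝ := fun δ => ⟪w δ, v⟫
  set p := ∑ δ ∈ Δ, (c δ)⁺ • δ
  set m := ∑ δ ∈ Δ, (c δ)⁻ • δ
  have hv_eq : v = p - m := by
    rw [← Finset.sum_sub_distrib]
    simp_rw [← sub_smul, posPart_sub_negPart]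
    exact eq_sum_inner_dual_smul hspan hw v
  -- `‖m‖² = ⟪p, m⟫ - ⟪v, m⟫` with `⟪p, m⟫ ≤ 0 ≤ ⟪v, m⟫`, since `p` and `m` have disjoint supports.
  have hm : m = 0 := by
    have hpm := inner_sum_posPart_smul_sum_negPart_smul_nonpos hobtuse c
    have hvm : 0 ≤ ⟪v, m⟫ := by
      simp only [m, inner_sum, real_inner_smul_right]
      exact Finset.sum_nonneg fun δ hδ => mul_nonneg (negPart_nonneg _) (hv δ hδ)
    have hmm : ⟪m, m⟫ ≤ 0 := by
      have : ⟪m, m⟫ = ⟪p, m⟫ - ⟪v, m⟫ := by rw [hv_eq, inner_sub_left, sub_sub_cancel]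
      linarith
    exact inner_self_eq_zero.1 (le_antisymm hmm real_inner_self_nonneg)
  have hneg : (c γ)⁻ = 0 := by
    rw [← inner_dual_sum_smul hw (fun δ => (c δ)⁻) hγ]
    exact (congrArg _ hm).trans (inner_zero_right _)
  exact negPart_eq_zero.1 hneg

lemma sum_inner_mul_sum_inner_dual (hspan : Submodule.span ℝ (Δ : Set E) = ⊤)
    (hw : ∀ α ∈ Δ, ∀ β ∈ Δ, ⟪w α, β⟫ = if α = β then (1 : ℝ) else 0) {α : E} (hα : α ∈ Δ) :
    ∑ β ∈ Δ, ⟪α, β⟫ * ∑ γ ∈ Δ, ⟪w β, w γ⟫ = 1 := by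
  calc ∑ β ∈ Δ, ⟪α, β⟫ * ∑ γ ∈ Δ, ⟪w β, w γ⟫
      = ⟪∑ β ∈ Δ, ⟪α, β⟫ • w β, ∑ γ ∈ Δ, w γ⟫ := by
        rw [sum_inner]
        exact Finset.sum_congr rfl fun β _ => by rw [real_inner_smul_left, inner_sum]
    _ = ∑ γ ∈ Δ, ⟪w γ, α⟫ := by
        rw [← eq_sum_inner_smul_dual hspan hw α, inner_sum]
        simp only [real_inner_comm]
    _ = 1 := by
        rw [Finset.sum_congr rfl fun γ hγ => hw γ hγ α hα]
        simp [hα]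

end DualFamily

namespace IsRootSystemBase

variable {E : Type*} [NormedAddCommGroup E] [InnerProductSpace ℝ E] [FiniteDimensional ℝ E]
  [DecidableEq E] {Φ : Set E} {Δ : Finset E} {w : E → E}

lemma inner_nonpos_of_ne (hbase : IsRootSystemBase Φ Δ)
    (hw : ∀ α ∈ Δ, ∀ β ∈ Δ, ⟪w α, β⟫ = if α = β then (1 : ℝ) else 0)
    {β γ : E} (hβ : β ∈ Δ) (hγ : γ ∈ Δ) (hne : β ≠ γ) : ⟪β, γ⟫ ≤ 0 := by
  by_contra! hpos
  have hββ : 0 < ⟪β, β⟫ := real_inner_self_pos.2 (hbase.ne_zero β (hbase.subset hβ))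
  set c : ℝ := 2 * ⟪β, γ⟫ / ⟪β, β⟫
  have hc : 0 < c := by positivity
  -- The reflection `γ - c • β` of `γ` in `β` is a root with coordinates of both signs.
  have hrefl : γ - c • β ∈ Φ := hbase.reflect_mem β (hbase.subset hβ) γ (hbase.subset hγ)
  have hcoord : ∀ δ ∈ Δ,
      ⟪w δ, γ - c • β⟫ = (if δ = γ then 1 else 0) - c * if δ = β then 1 else 0 := fun δ hδ => by
    rw [inner_sub_right, real_inner_smul_right, hw δ hδ γ hγ, hw δ hδ β hβ]
  rcases hbase.pos_or_neg _ hrefl with ⟨e, he, hrep⟩ | ⟨e, he, hrep⟩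
  · have := hcoord β hβ
    rw [hrep, inner_dual_sum_smul hw e hβ, if_neg hne, if_pos rfl] at this
    linarith [he β hβ]
  · have := hcoord γ hγ
    rw [hrep, inner_neg_right, inner_dual_sum_smul hw e hγ, if_pos rfl, if_neg hne.symm] at this
    linarith [he γ hγ]

lemma inner_dual_nonneg (hbase : IsRootSystemBase Φ Δ)
    (hw : ∀ α ∈ Δ, ∀ β ∈ Δ, ⟪w α, β⟫ = if α = β then (1 : ℝ) else 0)
    {β γ : E} (hβ : β ∈ Δ) (hγ : γ ∈ Δ) : 0 ≤ ⟪w β, w γ⟫ :=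
  inner_dual_nonneg_of_forall_inner_nonneg hbase.span_top hw
    (fun _ h₁ _ h₂ hne => hbase.inner_nonpos_of_ne hw h₁ h₂ hne)
    (fun δ hδ => by rw [hw γ hγ δ hδ]; split_ifs <;> norm_num) hβ

lemma sum_inner_dual_pos (hbase : IsRootSystemBase Φ Δ)
    (hw : ∀ α ∈ Δ, ∀ β ∈ Δ, ⟪w α, β⟫ = if α = β then (1 : ℝ) else 0)
    {γ : E} (hγ : γ ∈ Δ) : 0 < ∑ β ∈ Δ, ⟪w γ, w β⟫ := by
  refine Finset.sum_pos' (fun β hβ => hbase.inner_dual_nonneg hw hγ hβ) ⟨γ, hγ, ?_⟩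
  refine real_inner_self_pos.2 fun h => ?_
  simpa [h] using hw γ hγ γ hγ

end IsRootSystemBase

theorem root_ge_weighted_dual_weight_of_max_general
    {E : Type*} [NormedAddCommGroup E] [InnerProductSpace ℝ E] [FiniteDimensional ℝ E]
    [DecidableEq E] (Φ : Set E) (Δ : Finset E) (hbase : IsRootSystemBase Φ Δ)
    (w : E → E) (hw : ∀ α ∈ Δ, ∀ β ∈ Δ, ⟪w α, β⟫ = if α = β then (1 : ℝ) else 0)
    (d : E → ℝ) (hd : ∀ γ ∈ Δ, d γ = ∑ β ∈ Δ, ⟪w γ, w β⟫)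
    (α : E) (hα : α ∈ Δ) (a : Module.Dual ℝ E)
    (hmax : ∀ β ∈ Δ, (d α)⁻¹ * a (w α) ≥ (d β)⁻¹ * a (w β)) :
    a α ≥ (d α)⁻¹ * a (w α) := by
  set t := (d α)⁻¹ * a (w α)
  have hdpos : ∀ β ∈ Δ, 0 < d β := fun β hβ => hd β hβ ▸ hbase.sum_inner_dual_pos hw hβ
  have hterm : ∀ β ∈ Δ, ⟪α, β⟫ * (d β * t) ≤ ⟪α, β⟫ * a (w β) := by
    intro β hβ
    rcases eq_or_ne α β with rfl | hne
    · rw [mul_inv_cancel_left₀ (hdpos α hα).ne']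
    · exact mul_le_mul_of_nonpos_left ((inv_mul_le_iff₀ (hdpos β hβ)).1 (hmax β hβ))
        (hbase.inner_nonpos_of_ne hw hα hβ hne)
  calc a α = ∑ β ∈ Δ, ⟪α, β⟫ * a (w β) := by
        conv_lhs => rw [eq_sum_inner_smul_dual hbase.span_top hw α]
        simp only [map_sum, map_smul, smul_eq_mul]
    _ ≥ ∑ β ∈ Δ, ⟪α, β⟫ * (d β * t) := Finset.sum_le_sum hterm
    _ = (∑ β ∈ Δ, ⟪α, β⟫ * ∑ γ ∈ Δ, ⟪w β, w γ⟫) * t := by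
        rw [Finset.sum_mul]
        exact Finset.sum_congr rfl fun β hβ => by rw [hd β hβ, mul_assoc]
    _ = t := by rw [sum_inner_mul_sum_inner_dual hbase.span_top hw hα, one_mul]

/-- The case `I = ∅` of the appendix theorem: if `a ∈ E*` satisfies
`w̄_α(a) ≥ w̄_β(a)` for all `β ∈ Δ` and `w̄_α(a) ≥ 0`, then `α(a) ≥ w̄_α(a)`,
where `w̄_γ = w_γ / d_γ` is the weighted dual weight. -/
theorem root_ge_weighted_dual_weight_of_max
    {E : Type*} [NormedAddCommGroup E] [InnerProductSpace ℝ E] [FiniteDimensional ℝ E]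
    [DecidableEq E] (Φ : Set E) (Δ : Finset E) (hbase : IsRootSystemBase Φ Δ)
    (w : E → E) (hw : ∀ α ∈ Δ, ∀ β ∈ Δ, ⟪w α, β⟫ = if α = β then (1 : ℝ) else 0)
    (d : E → ℝ) (hd : ∀ γ ∈ Δ, d γ = ∑ β ∈ Δ, ⟪w γ, w β⟫)
    (α : E) (hα : α ∈ Δ) (a : Module.Dual ℝ E)
    (hmax : ∀ β ∈ Δ, (d α)⁻¹ * a (w α) ≥ (d β)⁻¹ * a (w β))
    (hnonneg : (d α)⁻¹ * a (w α) ≥ 0) :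
    a α ≥ (d α)⁻¹ * a (w α) :=
  root_ge_weighted_dual_weight_of_max_general Φ Δ hbase w hw d hd α hα a hmax
end
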